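/- Every finite critical (P5, C4)-free graph G is either a complete graph, or a 'non-empty, 2K1-free'-expansion of the 5-cycle C5, or a 'non-empty, 2K1-free'-expansion of the 5-wheel W5. -/

import Mathlib

/-!
If `G` has no induced `C₅`, suppose it is not complete and take a non-adjacent pair `a, b` with
the most common neighbours. A shortest path from `a` to `b` avoiding their common neighbourhood
would, as `G` is `P₅`-free, be an induced `P₄` `a x y b`; `C₄`- and `C₅`-freeness then make
every common neighbour of `a, b` adjacent to `x`, so the non-adjacent pair `x, b` has the extra
common neighbour `y`, contradicting maximality. So the common neighbourhood, a clique by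
`C₄`-freeness, separates `a` from `b`. A critical graph has no such clique cutset: colourings of
the two sides with fewer than `χ(G)` colours can be permuted to agree on the clique and glued.

If `G` has an induced `C₅` `c`, forbidding `P₅` and `C₄` leaves every other vertex adjacent to
all of `c` (a hub), to none of it, or to the same vertices of `c` as some `c i`, apart from `c i`
itself. Vertices of the second kind would be cut off by the clique of hubs, so there are none;
the hubs and the five classes are cliques, joined or not as in `W₅`.
-/

open SimpleGraph

/-- `G` is `H`-free: no induced subgraph of `G` is isomorphic to `H`. -/
def IndFree {α β : Type*} (H : SimpleGraph α) (G : SimpleGraph β) : Prop :=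
  ∀ s : Set β, ¬ Nonempty (H ≃g G.induce s)

/-- The banner: a 4-cycle `0-1-2-3-0` together with a pendant vertex `4` adjacent to `0`. -/
def banner : SimpleGraph (Fin 5) :=
  SimpleGraph.fromEdgeSet {s(0,1), s(1,2), s(2,3), s(3,0), s(0,4)}

/-- The co-banner: the complement of the banner. -/
def coBanner : SimpleGraph (Fin 5) := bannerᶜ

/-- `2K₂`: the disjoint union of two edges. -/
def twoK2 : SimpleGraph (Fin 4) := SimpleGraph.fromEdgeSet {s(0,1), s(2,3)}

/-- `3K₁`: three pairwise nonadjacent vertices. -/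
def threeK1 : SimpleGraph (Fin 3) := ⊥

/-- The 5-wheel: a 5-cycle `0-1-2-3-4-0` plus a hub `5` adjacent to all cycle vertices. -/
def wheel5 : SimpleGraph (Fin 6) :=
  SimpleGraph.fromEdgeSet
    {s(0,1), s(1,2), s(2,3), s(3,4), s(4,0), s(5,0), s(5,1), s(5,2), s(5,3), s(5,4)}

/-- A nonempty set `M` is a module if every vertex outside `M` is adjacent to all
or to none of the vertices of `M`. -/
def IsModule {V : Type*} (G : SimpleGraph V) (M : Set V) : Prop :=
  M.Nonempty ∧ ∀ v ∉ M, (∀ u ∈ M, G.Adj v u) ∨ (∀ u ∈ M, ¬ G.Adj v u)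

/-- `X` is a clique-separator of modules in `G`. -/
def IsCliqueSeparatorOfModules {V : Type*} (G : SimpleGraph V) (X : Set V) : Prop :=
  (∃ (k : ℕ) (Xs : Fin k → Set V),
      (∀ i, IsModule G (Xs i)) ∧
      (∀ i j, i ≠ j → Disjoint (Xs i) (Xs j)) ∧
      (∀ i j, i ≠ j → ∀ u ∈ Xs i, ∀ v ∈ Xs j, G.Adj u v) ∧
      X = ⋃ i, Xs i) ∧
  (∃ A B : Set V, A ∪ B = Set.univ ∧ (A \ B).Nonempty ∧ (B \ A).Nonempty ∧
      (∀ a ∈ A \ B, ∀ b ∈ B \ A, ¬ G.Adj a b) ∧ A ∩ B = X)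

/-- A graph is prime if it has no homogeneous set,
i.e. no module `M` with `1 < |M| < |V(G)|`. -/
def IsPrime {V : Type*} (G : SimpleGraph V) : Prop :=
  ¬ ∃ M : Set V, IsModule G M ∧ 1 < M.ncard ∧ M.ncard < Nat.card V

/-- A nonempty graph is critical if deleting any vertex decreases the chromatic number. -/
def IsCritical {V : Type*} (G : SimpleGraph V) : Prop :=
  Nonempty V ∧ ∀ v : V, (G.induce {u | u ≠ v}).chromaticNumber < G.chromaticNumber

/-- `G` is a `non-empty, 2K₁-free'-expansion of `G'`: the fibres of `f` partition `V(G)`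
into nonempty cliques, with complete/empty bipartite connections according to `G'`. -/
def IsExpansionOf {V W : Type*} (G : SimpleGraph V) (G' : SimpleGraph W) : Prop :=
  ∃ f : V → W, Function.Surjective f ∧
    (∀ u v, u ≠ v → f u = f v → G.Adj u v) ∧
    (∀ u v, f u ≠ f v → (G.Adj u v ↔ G'.Adj (f u) (f v)))

/-- The weighted chromatic number `χ_q(G)`: the least `k` such that every vertex `v`
can be assigned a set of `q v` colours from `{1,…,k}` with disjoint sets on adjacent
vertices. -/
noncomputable def wChromaticNumber {V : Type*} (G : SimpleGraph V) (q : V → ℕ) : ℕ :=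
  sInf {k | ∃ L : V → Finset (Fin k), (∀ v, (L v).card = q v) ∧
    ∀ ⦃u v⦄, G.Adj u v → Disjoint (L u) (L v)}

/-- The weighted clique number `ω_q(G)`: the maximum total weight of a clique. -/
noncomputable def wCliqueNum {V : Type*} (G : SimpleGraph V) (q : V → ℕ) : ℕ :=
  sSup {m | ∃ s : Finset V, G.IsClique (s : Set V) ∧ m = ∑ v ∈ s, q v}

/-- `Q(F)`: a path `u₁u₂u₃u₄` whose third vertex `u₃` has been replaced by a copy of `F`,
each of whose vertices is adjacent to both `u₂` and `u₄`. Here `inr 0 = u₁`, `inr 1 = u₂`,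
`inr 2 = u₄`, and `inl w` are the vertices of the copy of `F`. -/
def QGraph {W : Type*} (F : SimpleGraph W) : SimpleGraph (W ⊕ Fin 3) :=
  SimpleGraph.fromRel (fun a b =>
    (∃ w w', a = Sum.inl w ∧ b = Sum.inl w' ∧ F.Adj w w') ∨
    (a = Sum.inr 0 ∧ b = Sum.inr 1) ∨
    (∃ w, a = Sum.inl w ∧ (b = Sum.inr 1 ∨ b = Sum.inr 2)))

/-- The join of two graphs: all edges of both graphs plus all edges in between. -/
def joinGraph {α β : Type*} (G₁ : SimpleGraph α) (G₂ : SimpleGraph β) :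
    SimpleGraph (α ⊕ β) :=
  SimpleGraph.fromRel (fun a b =>
    (∃ u v, a = Sum.inl u ∧ b = Sum.inl v ∧ G₁.Adj u v) ∨
    (∃ u v, a = Sum.inr u ∧ b = Sum.inr v ∧ G₂.Adj u v) ∨
    (∃ u v, a = Sum.inl u ∧ b = Sum.inr v))

/-- `H` has a spanning complete bipartite subgraph. -/
def HasSpanningCompleteBipartite {α : Type*} (H : SimpleGraph α) : Prop :=
  ∃ A B : Set α, A.Nonempty ∧ B.Nonempty ∧ Disjoint A B ∧ A ∪ B = Set.univ ∧
    ∀ a ∈ A, ∀ b ∈ B, H.Adj a b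

/-- `G'` is a `q`-expansion of `G`: each vertex `u` of `G` is replaced by a clique on
`q u` vertices, joined completely or not at all according to adjacency in `G`. -/
def IsWeightedExpansion {V' V : Type*} (G' : SimpleGraph V') (G : SimpleGraph V)
    (q : V → ℕ) : Prop :=
  ∃ f : V' → V,
    (∀ v : V, Nat.card (f ⁻¹' {v}) = q v) ∧
    (∀ a b : V', a ≠ b → f a = f b → G'.Adj a b) ∧
    (∀ a b : V', f a ≠ f b → (G'.Adj a b ↔ G.Adj (f a) (f b)))

/-- `q` is `⊲`-minimal: no weight function pointwise at most `q` with strictly smaller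
total weight has the same weighted chromatic number. -/
def IsTriMinimal {V : Type*} [Fintype V] (G : SimpleGraph V) (q : V → ℕ) : Prop :=
  ¬ ∃ q' : V → ℕ, (∀ v, q' v ≤ q v) ∧ (∑ v, q' v) < (∑ v, q v) ∧
      wChromaticNumber G q' = wChromaticNumber G q

section

variable {V : Type*} {G : SimpleGraph V}

theorem Equiv.Perm.exists_apply_eq_of_injective {ι α : Type*} [Finite α] {f g : ι → α}
    (hf : Function.Injective f) (hg : Function.Injective g) :
    ∃ σ : Equiv.Perm α, ∀ i, σ (f i) = g i := by
  classical
  let e := (Equiv.ofInjective f hf).symm.trans (Equiv.ofInjective g hg)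
  refine ⟨e.extendSubtype, fun i => ?_⟩
  rw [e.extendSubtype_apply_of_mem _ ⟨i, rfl⟩]
  simp [e]

namespace SimpleGraph

theorem isIndContained_of_adj_iff {α β : Type*} [LinearOrder α] {H : SimpleGraph α}
    {G : SimpleGraph β} {f : α → β} (hf : Function.Injective f)
    (h : ∀ i j, i < j → (G.Adj (f i) (f j) ↔ H.Adj i j)) : H ⊴ G := by
  refine ⟨⟨⟨f, hf⟩, fun {i j} => ?_⟩⟩
  rcases lt_trichotomy i j with hij | rfl | hij
  · exact h i j hij
  · simp
  · simpa [G.adj_comm, H.adj_comm] using h j i hij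

theorem pathGraph_five_isIndContained {a b c d e : V}
    (hab : G.Adj a b) (hbc : G.Adj b c) (hcd : G.Adj c d) (hde : G.Adj d e)
    (hac : ¬G.Adj a c) (had : ¬G.Adj a d) (hae : ¬G.Adj a e)
    (hbd : ¬G.Adj b d) (hbe : ¬G.Adj b e) (hce : ¬G.Adj c e) : pathGraph 5 ⊴ G := by
  have := hab.ne; have := hbc.ne; have := hcd.ne; have := hde.ne
  have : a ≠ c := by rintro rfl; exact had hcd
  have : a ≠ d := by rintro rfl; exact hae hde
  have : a ≠ e := by rintro rfl; exact hbe hab.symm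
  have : b ≠ d := by rintro rfl; exact hbe hde
  have : b ≠ e := by rintro rfl; exact hae hab
  have : c ≠ e := by rintro rfl; exact hbe hbc
  refine isIndContained_of_adj_iff (f := ![a, b, c, d, e]) ?_ ?_
  · intro i j h
    fin_cases i <;> fin_cases j <;> simp_all
  · intro i j hij
    fin_cases i <;> fin_cases j <;> simp_all [pathGraph_adj]

theorem cycleGraph_four_isIndContained {a b c d : V}
    (hab : G.Adj a b) (hbc : G.Adj b c) (hcd : G.Adj c d) (hda : G.Adj d a)
    (hac : ¬G.Adj a c) (hbd : ¬G.Adj b d) (hac' : a ≠ c) (hbd' : b ≠ d) :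
    cycleGraph 4 ⊴ G := by
  have := hab.ne; have := hbc.ne; have := hcd.ne; have := hda.ne
  refine isIndContained_of_adj_iff (f := ![a, b, c, d]) ?_ ?_
  · intro i j h
    fin_cases i <;> fin_cases j <;> simp_all
  · intro i j hij
    fin_cases i <;> fin_cases j <;> simp_all [cycleGraph_adj, hda.symm] <;> decide

theorem cycleGraph_five_isIndContained {a b c d e : V}
    (hab : G.Adj a b) (hbc : G.Adj b c) (hcd : G.Adj c d) (hde : G.Adj d e) (hea : G.Adj e a)
    (hac : ¬G.Adj a c) (had : ¬G.Adj a d) (hbd : ¬G.Adj b d) (hbe : ¬G.Adj b e)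
    (hce : ¬G.Adj c e) : cycleGraph 5 ⊴ G := by
  have := hab.ne; have := hbc.ne; have := hcd.ne; have := hde.ne; have := hea.ne
  have : a ≠ c := by rintro rfl; exact had hcd
  have : a ≠ d := by rintro rfl; exact hac hcd.symm
  have : b ≠ d := by rintro rfl; exact hbe hde
  have : b ≠ e := by rintro rfl; exact hbd hde.symm
  have : c ≠ e := by rintro rfl; exact hac hea.symm
  refine isIndContained_of_adj_iff (f := ![a, b, c, d, e]) ?_ ?_
  · intro i j h
    fin_cases i <;> fin_cases j <;> simp_all
  · intro i j hij
    fin_cases i <;> fin_cases j <;> simp_all [cycleGraph_adj, hea.symm] <;> decide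

theorem cycleGraph_five_adj_iff {i j : Fin 5} :
    (cycleGraph 5).Adj i j ↔ j = i + 1 ∨ i = j + 1 := by
  revert i j; decide

namespace Walk

variable {u v : V}

theorem not_adj_getVert_of_length_eq_dist {p : G.Walk u v} (hp : p.length = G.dist u v)
    {i j : ℕ} (hij : i + 1 < j) (hj : j ≤ p.length) : ¬G.Adj (p.getVert i) (p.getVert j) := by
  intro h
  have := dist_le ((p.take i).append (cons h (p.drop j)))
  simp only [length_append, take_length, length_cons, drop_length] at this
  omega

theorem pathGraph_isIndContained_of_length_eq_dist {p : G.Walk u v}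
    (hp : p.length = G.dist u v) {k : ℕ} (hk : k ≤ p.length) : pathGraph (k + 1) ⊴ G := by
  have hinj := (p.isPath_of_length_eq_dist hp).getVert_injOn
  refine isIndContained_of_adj_iff (f := fun i : Fin (k + 1) => p.getVert i)
    (fun i j hij => Fin.ext (hinj (by simp; omega) (by simp; omega) hij)) fun i j hij => ?_
  rw [pathGraph_adj]
  rcases (show i.val + 1 = j.val ∨ i.val + 1 < j.val by omega) with h | h
  · rw [← h]
    exact iff_of_true (p.adj_getVert_succ (by omega)) (Or.inl rfl)
  · exact iff_of_false (p.not_adj_getVert_of_length_eq_dist hp h (by omega)) (by omega)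

end Walk

structure IsCliqueSeparation (G : SimpleGraph V) (A B : Set V) : Prop where
  union_eq : A ∪ B = Set.univ
  not_adj : ∀ a ∈ A \ B, ∀ b ∈ B \ A, ¬G.Adj a b
  isClique_inter : G.IsClique (A ∩ B)

theorem Coloring.injective_restrict_of_isClique {α : Type*} {s t : Set V}
    (C : (G.induce s).Coloring α) (ht : G.IsClique t) (hts : t ⊆ s) :
    Function.Injective fun x : t => C ⟨x, hts x.2⟩ := by
  intro x y hxy
  by_contra hne
  exact C.valid (G := G.induce s) (by simpa using ht x.2 y.2 (Subtype.coe_ne_coe.2 hne)) hxy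

theorem IsCliqueSeparation.colorable {A B : Set V} {n : ℕ} (h : G.IsCliqueSeparation A B)
    (hA : (G.induce A).Colorable n) (hB : (G.induce B).Colorable n) : G.Colorable n := by
  classical
  obtain ⟨CA⟩ := hA
  obtain ⟨CB⟩ := hB
  obtain ⟨σ, hσ⟩ := Equiv.Perm.exists_apply_eq_of_injective
    (CB.injective_restrict_of_isClique h.isClique_inter Set.inter_subset_right)
    (CA.injective_restrict_of_isClique h.isClique_inter Set.inter_subset_left)
  have hB_of_not_A (v : V) (hv : v ∉ A) : v ∈ B :=
    (h.union_eq.symm ▸ Set.mem_univ v : v ∈ A ∪ B).resolve_left hv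
  have hAB (u v : V) (hu : u ∈ A) (hv : v ∉ A) (huv : G.Adj u v) : u ∈ B := by
    by_contra huB
    exact h.not_adj u ⟨hu, huB⟩ v ⟨hB_of_not_A v hv, hv⟩ huv
  have valid {s : Set V} (C : (G.induce s).Coloring (Fin n)) {u v : V} (hu : u ∈ s) (hv : v ∈ s)
      (huv : G.Adj u v) : C ⟨u, hu⟩ ≠ C ⟨v, hv⟩ :=
    C.valid (induce_adj.2 huv : (G.induce s).Adj ⟨u, hu⟩ ⟨v, hv⟩)
  refine ⟨Coloring.mk (fun v => if hv : v ∈ A then CA ⟨v, hv⟩ else σ (CB ⟨v, hB_of_not_A v hv⟩))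
    fun {u v} huv => ?_⟩
  split_ifs with hu hv hv
  · exact valid CA hu hv huv
  · rw [← hσ ⟨u, hu, hAB u v hu hv huv⟩]
    exact σ.injective.ne (valid CB _ _ huv)
  · rw [← hσ ⟨v, hv, hAB v u hv hu huv.symm⟩]
    exact σ.injective.ne (valid CB _ _ huv)
  · exact σ.injective.ne (valid CB _ _ huv)

end SimpleGraph

theorem indFree_iff_not_isIndContained {α β : Type*} {H : SimpleGraph α} {G : SimpleGraph β} :
    IndFree H G ↔ ¬H ⊴ G := by
  simp [IndFree, isIndContained_iff_exists_iso_induce]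

theorem IndFree.not_isIndContained {α β : Type*} {H : SimpleGraph α} {G : SimpleGraph β}
    (h : IndFree H G) : ¬H ⊴ G :=
  indFree_iff_not_isIndContained.1 h

theorem IndFree.induce {α : Type*} {H : SimpleGraph α} (h : IndFree H G) (s : Set V) :
    IndFree H (G.induce s) :=
  indFree_iff_not_isIndContained.2 fun hs => h.not_isIndContained (hs.trans ⟨Embedding.induce s⟩)

theorem IndFree.exists_adj_adj_or_induced_path4 (hP5 : IndFree (pathGraph 5) G) {a b : V}
    (hr : G.Reachable a b) (hne : a ≠ b) (hab : ¬G.Adj a b) :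
    (∃ x, G.Adj a x ∧ G.Adj x b) ∨
      ∃ x y, G.Adj a x ∧ G.Adj x y ∧ G.Adj y b ∧ ¬G.Adj a y ∧ ¬G.Adj x b := by
  obtain ⟨p, hp⟩ := hr.exists_walk_length_eq_dist
  have h2 : 2 ≤ p.length := by
    have := hr.pos_dist_of_ne hne
    have := mt dist_eq_one_iff_adj.1 hab
    omega
  have h4 : p.length < 4 := not_le.1 fun h =>
    hP5.not_isIndContained (p.pathGraph_isIndContained_of_length_eq_dist hp h)
  have hstep (i : ℕ) (hi : i < p.length) := p.adj_getVert_succ hi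
  have hfar (i j : ℕ) (hij : i + 1 < j) (hj : j ≤ p.length) :=
    p.not_adj_getVert_of_length_eq_dist hp hij hj
  interval_cases hlen : p.length
  · left
    have hb : p.getVert 2 = b := p.getVert_of_length_le (by omega)
    refine ⟨p.getVert 1, ?_, ?_⟩
    · simpa using hstep 0 (by omega)
    · simpa [← hb] using hstep 1 (by omega)
  · right
    have hb : p.getVert 3 = b := p.getVert_of_length_le (by omega)
    refine ⟨p.getVert 1, p.getVert 2, ?_, hstep 1 (by omega), ?_, ?_, ?_⟩
    · simpa using hstep 0 (by omega)
    · simpa [← hb] using hstep 2 (by omega)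
    · simpa using hfar 0 2 (by omega) (by omega)
    · simpa [← hb] using hfar 1 3 (by omega) (by omega)

theorem isClique_commonNeighbors (hC4 : IndFree (cycleGraph 4) G) {a b : V} (hne : a ≠ b)
    (hab : ¬G.Adj a b) : G.IsClique (G.commonNeighbors a b) := by
  intro s hs t ht hst
  by_contra hst'
  obtain ⟨has, hbs⟩ := G.mem_commonNeighbors.1 hs
  obtain ⟨hat, hbt⟩ := G.mem_commonNeighbors.1 ht
  exact hC4.not_isIndContained
    (cycleGraph_four_isIndContained has hbs.symm hbt hat.symm hab hst' hne hst)

theorem commonNeighbors_ssubset_of_induced_path4 (hC4 : IndFree (cycleGraph 4) G)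
    (hC5 : ¬cycleGraph 5 ⊴ G) {a x y b : V} (hax : G.Adj a x) (hxy : G.Adj x y)
    (hyb : G.Adj y b) (hay : ¬G.Adj a y) (hxb : ¬G.Adj x b) (hab : ¬G.Adj a b) :
    G.commonNeighbors a b ⊂ G.commonNeighbors x b := by
  refine ⟨fun s hs => ?_, fun h => hay (G.mem_commonNeighbors.1 (h ⟨hxy, hyb.symm⟩)).1⟩
  obtain ⟨has, hbs⟩ := G.mem_commonNeighbors.1 hs
  refine G.mem_commonNeighbors.2 ⟨?_, hbs⟩
  by_contra hxs
  have hay' : a ≠ y := by rintro rfl; exact hab hyb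
  have hxs' : x ≠ s := by rintro rfl; exact hxb hbs.symm
  by_cases hys : G.Adj y s
  · exact hC4.not_isIndContained
      (cycleGraph_four_isIndContained hax hxy hys has.symm hay hxs hay' hxs')
  · exact hC5 (cycleGraph_five_isIndContained hax hxy hyb hbs has.symm hay hab hxb hxs hys)

theorem IsCritical.not_isCliqueSeparation (hG : IsCritical G) {A B : Set V}
    (hAB : (A \ B).Nonempty) (hBA : (B \ A).Nonempty) : ¬G.IsCliqueSeparation A B := by
  intro h
  obtain ⟨a, haA, haB⟩ := hAB
  obtain ⟨b, hbB, hbA⟩ := hBA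
  have hlt := max_lt (hG.2 a) (hG.2 b)
  obtain ⟨k, hk⟩ := ENat.ne_top_iff_exists.1 (hlt.trans_le le_top).ne
  have hcol (v : V) (s : Set V) (hv : v ∉ s)
      (hle : (G.induce {u | u ≠ v}).chromaticNumber ≤ k) : (G.induce s).Colorable k :=
    (chromaticNumber_le_iff_colorable.1 hle).of_hom
      (induceHomOfLE G fun u hu => show u ≠ v from fun huv => hv (huv ▸ hu)).toHom
  have := (h.colorable (hcol b A hbA (hk ▸ le_max_right _ _))
    (hcol a B haB (hk ▸ le_max_left _ _))).chromaticNumber_le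
  exact (hk ▸ hlt).not_ge this

theorem IsCritical.adj_of_not_isIndContained_cycleGraph_five [Finite V] (hG : IsCritical G)
    (hP5 : IndFree (pathGraph 5) G) (hC4 : IndFree (cycleGraph 4) G)
    (hC5 : ¬cycleGraph 5 ⊴ G) (u v : V) (huv : u ≠ v) : G.Adj u v := by
  by_contra huv'
  obtain ⟨⟨a, b⟩, ⟨hne, hab⟩, hmax⟩ := Set.exists_max_image
    {p : V × V | p.1 ≠ p.2 ∧ ¬G.Adj p.1 p.2} (fun p => (G.commonNeighbors p.1 p.2).ncard)
    (Set.toFinite _) ⟨(u, v), huv, huv'⟩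
  dsimp only at hne hab hmax
  set S := G.commonNeighbors a b
  have ha : a ∉ S := fun h => G.irrefl (G.mem_commonNeighbors.1 h).1
  have hb : b ∉ S := fun h => G.irrefl (G.mem_commonNeighbors.1 h).2
  let H := G.induce Sᶜ
  let R : Set V := {w | ∃ hw : w ∉ S, H.Reachable ⟨a, ha⟩ ⟨w, hw⟩}
  have hbR : b ∉ R := by
    rintro ⟨hbS, hr⟩
    rcases (hP5.induce Sᶜ).exists_adj_adj_or_induced_path4 hr (by simpa using hne)
      (by simpa [H] using hab) with ⟨x, hax, hxb⟩ | ⟨x, y, hax, hxy, hyb, hay, hxb⟩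
    · exact x.2 (G.mem_commonNeighbors.2 ⟨by simpa [H] using hax, by simpa [H] using hxb.symm⟩)
    · simp only [induce_adj] at hax hxy hyb hay hxb
      have hlt := Set.ncard_lt_ncard
        (commonNeighbors_ssubset_of_induced_path4 hC4 hC5 hax hxy hyb hay hxb hab)
      have hxb' : x.1 ≠ b := by rintro h; exact hab (h ▸ hax)
      exact (hmax (x, b) ⟨hxb', hxb⟩).not_gt hlt
  refine hG.not_isCliqueSeparation (A := S ∪ R) (B := Rᶜ)
    ⟨a, Or.inr ⟨ha, .rfl⟩, fun h => h ⟨ha, .rfl⟩⟩ ⟨b, hbR, fun h => h.elim hb hbR⟩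
    ⟨by rw [Set.union_assoc, Set.union_compl_self, Set.union_univ], ?_, ?_⟩
  · rintro w ⟨-, hwR⟩ z ⟨-, hzSR⟩ hwz
    obtain ⟨hw, hr⟩ := not_not.1 hwR
    exact hzSR (Or.inr ⟨fun hz => hzSR (Or.inl hz),
      hr.trans (Adj.reachable (by simpa [H] using hwz))⟩)
  · exact (isClique_commonNeighbors hC4 hne hab).subset fun w hw => hw.1.resolve_right hw.2

theorem Finset.eq_empty_or_eq_univ_or_cycleGraph_five (N : Finset (Fin 5))
    (hmid : ∀ i, i ∈ N → i + 2 ∈ N → i + 1 ∈ N)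
    (hgap : ∀ i, i ∈ N → i + 1 ∈ N ∨ i + 2 ∈ N ∨ i + 3 ∈ N) :
    N = ∅ ∨ N = Finset.univ ∨ ∃ i, ∀ j, j ≠ i → (j ∈ N ↔ (cycleGraph 5).Adj i j) := by
  revert N; decide

namespace CycleFive

variable (c : cycleGraph 5 ↪g G)

def IsHub (v : V) : Prop := ∀ j, G.Adj v (c j)

/-- `v` sees the other vertices of the cycle exactly as `c i` does: the class of `c i` in the
expansion. -/
def InPart (i : Fin 5) (v : V) : Prop := ∀ j, j ≠ i → (G.Adj v (c j) ↔ (cycleGraph 5).Adj i j)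

variable {c}

theorem adj_apply_iff {i j : Fin 5} : G.Adj (c i) (c j) ↔ j = i + 1 ∨ i = j + 1 :=
  c.map_adj_iff.trans cycleGraph_five_adj_iff

theorem inPart_apply (i : Fin 5) : InPart c i (c i) := fun _ _ => c.map_adj_iff

theorem InPart.adj_iff {i j : Fin 5} {v : V} (hv : InPart c i v) (hj : j ≠ i) :
    G.Adj v (c j) ↔ j = i + 1 ∨ i = j + 1 :=
  (hv j hj).trans cycleGraph_five_adj_iff

theorem InPart.eq {i j : Fin 5} {v : V} (hi : InPart c i v) (hj : InPart c j v) : i = j := by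
  by_contra hne
  have key : ∀ i j : Fin 5, i ≠ j → ∃ k, k ≠ i ∧ k ≠ j ∧
      ¬((cycleGraph 5).Adj i k ↔ (cycleGraph 5).Adj j k) := by decide
  obtain ⟨k, hki, hkj, hk⟩ := key i j hne
  exact hk ((hi k hki).symm.trans (hj k hkj))

theorem InPart.adj_of_eq (hC4 : IndFree (cycleGraph 4) G) {i : Fin 5} {u v : V}
    (hu : InPart c i u) (hv : InPart c i v) (hne : u ≠ v) : G.Adj u v := by
  by_contra huv
  refine hC4.not_isIndContained (cycleGraph_four_isIndContained (b := c (i + 4)) (d := c (i + 1))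
    ?_ ?_ ?_ ?_ huv ?_ hne ?_) <;>
    grind [InPart.adj_iff, adj_apply_iff, G.adj_comm, c.injective.eq_iff]

theorem InPart.adj_of_succ (hP5 : IndFree (pathGraph 5) G) {i : Fin 5} {u v : V}
    (hu : InPart c i u) (hv : InPart c (i + 1) v) : G.Adj u v := by
  by_contra huv
  refine hP5.not_isIndContained (pathGraph_five_isIndContained (b := c (i + 4)) (c := c (i + 3))
    (d := c (i + 2)) ?_ ?_ ?_ ?_ ?_ ?_ huv ?_ ?_ ?_) <;>
    grind [InPart.adj_iff, adj_apply_iff, G.adj_comm]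

theorem InPart.not_adj_of_add_two (hC4 : IndFree (cycleGraph 4) G) {i : Fin 5} {u v : V}
    (hu : InPart c i u) (hv : InPart c (i + 2) v) : ¬G.Adj u v := by
  intro huv
  have hu1 := hu.adj_iff (j := i + 1) (by grind)
  have hv1 := hv.adj_iff (j := i + 1) (by grind)
  refine hC4.not_isIndContained (cycleGraph_four_isIndContained (c := c (i + 3)) (d := c (i + 4))
    huv ?_ ?_ ?_ ?_ ?_ ?_ ?_) <;> grind [InPart.adj_iff, adj_apply_iff, G.adj_comm]

theorem InPart.adj_iff_of_ne (hP5 : IndFree (pathGraph 5) G) (hC4 : IndFree (cycleGraph 4) G)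
    {i j : Fin 5} {u v : V} (hu : InPart c i u) (hv : InPart c j v) (hne : u ≠ v) :
    G.Adj u v ↔ i = j ∨ (cycleGraph 5).Adj i j := by
  have hpos : ∀ i j : Fin 5, j = i ∨ j = i + 1 ∨ i = j + 1 ∨ j = i + 2 ∨ i = j + 2 := by decide
  rcases hpos i j with rfl | rfl | rfl | rfl | rfl
  · exact iff_of_true (hu.adj_of_eq hC4 hv hne) (Or.inl rfl)
  · exact iff_of_true (hu.adj_of_succ hP5 hv) (Or.inr (by simp [cycleGraph_five_adj_iff]))
  · exact iff_of_true (hv.adj_of_succ hP5 hu).symm (Or.inr (by simp [cycleGraph_five_adj_iff]))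
  · exact iff_of_false (hu.not_adj_of_add_two hC4 hv) (by grind [cycleGraph_five_adj_iff])
  · exact iff_of_false (fun h => hv.not_adj_of_add_two hC4 hu h.symm)
      (by grind [cycleGraph_five_adj_iff])

theorem IsHub.adj (hC4 : IndFree (cycleGraph 4) G) {u v : V} (hu : IsHub c u) (hv : IsHub c v)
    (hne : u ≠ v) : G.Adj u v := by
  by_contra huv
  refine hC4.not_isIndContained (cycleGraph_four_isIndContained (b := c 0) (d := c 2)
    (hu 0) (hv 0).symm (hv 2) (hu 2).symm huv ?_ hne ?_) <;>
    grind [adj_apply_iff, c.injective.eq_iff]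

theorem IsHub.adj_of_inPart (hC4 : IndFree (cycleGraph 4) G) {i : Fin 5} {t u : V}
    (ht : IsHub c t) (hu : InPart c i u) : G.Adj t u := by
  by_contra htu
  have hut : u ≠ t := fun h => (hu.adj_iff (j := i + 2) (by grind)).not.2 (by grind) (h ▸ ht _)
  refine hC4.not_isIndContained (cycleGraph_four_isIndContained (b := c (i + 4)) (d := c (i + 1))
    ?_ (ht _).symm (ht _) ?_ (fun h => htu h.symm) ?_ hut ?_) <;>
    grind [InPart.adj_iff, adj_apply_iff, G.adj_comm, c.injective.eq_iff]

theorem isHub_or_exists_inPart_or_forall_not_adj (hP5 : IndFree (pathGraph 5) G)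
    (hC4 : IndFree (cycleGraph 4) G) (v : V) :
    IsHub c v ∨ (∃ i, InPart c i v) ∨ ∀ j, ¬G.Adj v (c j) := by
  classical
  by_cases hvc : ∃ i, c i = v
  · obtain ⟨i, rfl⟩ := hvc
    exact Or.inr (Or.inl ⟨i, inPart_apply i⟩)
  push Not at hvc
  let N := Finset.univ.filter fun j => G.Adj v (c j)
  have hN (j : Fin 5) : j ∈ N ↔ G.Adj v (c j) := by simp [N]
  have hmid : ∀ i, i ∈ N → i + 2 ∈ N → i + 1 ∈ N := by
    simp only [hN]
    intro i h0 h2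
    by_contra h1
    exact hC4.not_isIndContained (cycleGraph_four_isIndContained h0
      (adj_apply_iff.2 (by grind)) (adj_apply_iff.2 (by grind)) h2.symm h1
      (by grind [adj_apply_iff]) (hvc _).symm (by grind [c.injective.eq_iff]))
  have hgap : ∀ i, i ∈ N → i + 1 ∈ N ∨ i + 2 ∈ N ∨ i + 3 ∈ N := by
    simp only [hN]
    intro i h0
    by_contra! h
    refine hP5.not_isIndContained (pathGraph_five_isIndContained h0 ?_ ?_ ?_ h.1 h.2.1 h.2.2
      ?_ ?_ ?_) <;> grind [adj_apply_iff]
  rcases N.eq_empty_or_eq_univ_or_cycleGraph_five hmid hgap with hN0 | hN1 | ⟨i, hi⟩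
  · exact Or.inr (Or.inr fun j => by simpa [hN0] using (hN j).not)
  · exact Or.inl fun j => (hN j).1 (hN1 ▸ Finset.mem_univ j)
  · exact Or.inr (Or.inl ⟨i, fun j hj => (hN j).symm.trans (hi j hj)⟩)

end CycleFive

open CycleFive

theorem IsCritical.exists_adj_apply (hG : IsCritical G) (hP5 : IndFree (pathGraph 5) G)
    (hC4 : IndFree (cycleGraph 4) G) (c : cycleGraph 5 ↪g G) (v : V) : ∃ j, G.Adj v (c j) := by
  by_contra! hv
  let Z := {w | ∀ j, ¬G.Adj w (c j)}
  let T := {w | IsHub c w}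
  have hc0 : c 0 ∉ Z ∪ T := by
    rintro (h | h)
    · exact h 1 (adj_apply_iff.2 (by decide))
    · exact G.irrefl (h 0)
  refine hG.not_isCliqueSeparation (A := Z ∪ T) (B := Zᶜ) ⟨v, Or.inl hv, fun h => h hv⟩
    ⟨c 0, fun h => hc0 (Or.inl h), hc0⟩
    ⟨by rw [Set.union_right_comm, Set.union_compl_self, Set.univ_union], ?_, ?_⟩
  · rintro z ⟨-, hz⟩ w ⟨hwZ, hwT⟩ hzw
    rcases isHub_or_exists_inPart_or_forall_not_adj hP5 hC4 w with hw | ⟨i, hw⟩ | hw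
    · exact hwT (Or.inr hw)
    · have hz : ∀ j, ¬G.Adj z (c j) := not_not.1 hz
      refine hP5.not_isIndContained (pathGraph_five_isIndContained (c := c (i + 1))
        (d := c (i + 2)) (e := c (i + 3)) hzw ?_ ?_ ?_ (hz _) (hz _) (hz _) ?_ ?_ ?_) <;>
        grind [InPart.adj_iff, adj_apply_iff]
    · exact hwZ hw
  · intro x hx y hy hxy
    exact IsHub.adj hC4 (hx.1.resolve_left hx.2) (hy.1.resolve_left hy.2) hxy

theorem wheel5_adj_last_castSucc (i : Fin 5) : wheel5.Adj (Fin.last 5) i.castSucc := by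
  simp only [wheel5, fromEdgeSet_adj]
  revert i; decide

theorem wheel5_adj_castSucc {i j : Fin 5} :
    wheel5.Adj i.castSucc j.castSucc ↔ (cycleGraph 5).Adj i j := by
  simp only [wheel5, fromEdgeSet_adj]
  revert i j; decide

theorem isExpansionOf_of_adj_iff {W : Type*} {G' : SimpleGraph W} (f : V → W)
    (hf : Function.Surjective f)
    (h : ∀ u v, u ≠ v → (G.Adj u v ↔ f u = f v ∨ G'.Adj (f u) (f v))) : IsExpansionOf G G' := by
  refine ⟨f, hf, fun u v hne he => (h u v hne).2 (Or.inl he), fun u v hf' => ?_⟩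
  rw [h u v fun huv => hf' (huv ▸ rfl)]
  exact or_iff_right hf'

theorem IsCritical.isExpansionOf_of_cycleGraph_five_embedding (hG : IsCritical G)
    (hP5 : IndFree (pathGraph 5) G) (hC4 : IndFree (cycleGraph 4) G) (c : cycleGraph 5 ↪g G) :
    IsExpansionOf G (cycleGraph 5) ∨ IsExpansionOf G wheel5 := by
  classical
  have hcover (v : V) : ∃ i, IsHub c v ∨ InPart c i v := by
    rcases isHub_or_exists_inPart_or_forall_not_adj hP5 hC4 v with h | ⟨i, h⟩ | h
    · exact ⟨0, Or.inl h⟩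
    · exact ⟨i, Or.inr h⟩
    · obtain ⟨j, hj⟩ := hG.exists_adj_apply hP5 hC4 c v
      exact absurd hj (h j)
  choose part hpart using hcover
  have hpart' {v : V} (hv : ¬IsHub c v) : InPart c (part v) v := (hpart v).resolve_left hv
  have hnotHub (i : Fin 5) : ¬IsHub c (c i) := fun h => G.irrefl (h i)
  have part_apply (i : Fin 5) : part (c i) = i := (hpart' (hnotHub i)).eq (inPart_apply i)
  have hadj {u v : V} (hu : ¬IsHub c u) (hv : ¬IsHub c v) (hne : u ≠ v) :
      G.Adj u v ↔ part u = part v ∨ (cycleGraph 5).Adj (part u) (part v) :=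
    (hpart' hu).adj_iff_of_ne hP5 hC4 (hpart' hv) hne
  by_cases hT : ∃ t, IsHub c t
  · right
    obtain ⟨t, ht⟩ := hT
    refine isExpansionOf_of_adj_iff
      (fun v => if IsHub c v then Fin.last 5 else (part v).castSucc) (fun k => ?_) fun u v hne => ?_
    · induction k using Fin.lastCases with
      | last => exact ⟨t, if_pos ht⟩
      | cast i => exact ⟨c i, by simp [hnotHub i, part_apply]⟩
    · by_cases hu : IsHub c u <;> by_cases hv : IsHub c v <;> simp only [hu, hv, if_true, if_false]
      · exact iff_of_true (hu.adj hC4 hv hne) (Or.inl trivial)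
      · exact iff_of_true (hu.adj_of_inPart hC4 (hpart' hv)) (Or.inr (wheel5_adj_last_castSucc _))
      · exact iff_of_true (hv.adj_of_inPart hC4 (hpart' hu)).symm
          (Or.inr (wheel5_adj_last_castSucc _).symm)
      · rw [Fin.castSucc_inj, wheel5_adj_castSucc]
        exact hadj hu hv hne
  · left
    push Not at hT
    exact isExpansionOf_of_adj_iff part (fun i => ⟨c i, part_apply i⟩)
      fun u v hne => hadj (hT u) (hT v) hne

end

/-- Every finite critical `(P₅, C₄)`-free graph is complete, or a
`non-empty, 2K₁-free'-expansion of `C₅`, or a `non-empty, 2K₁-free'-expansion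
of the 5-wheel `W₅`. -/
theorem stmt8 {V : Type} [Fintype V] (G : SimpleGraph V) (hcrit : IsCritical G)
    (hP5 : IndFree (pathGraph 5) G) (hC4 : IndFree (cycleGraph 4) G) :
    (∀ u v : V, u ≠ v → G.Adj u v) ∨
    IsExpansionOf G (cycleGraph 5) ∨ IsExpansionOf G wheel5 := by
  by_cases hC5 : cycleGraph 5 ⊴ G
  · obtain ⟨c⟩ := hC5
    exact Or.inr (hcrit.isExpansionOf_of_cycleGraph_five_embedding hP5 hC4 c)
  · exact Or.inl (hcrit.adj_of_not_isIndContained_cycleGraph_five hP5 hC4 hC5)
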